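/- arXiv:1611.09479 — 5 statements merged into one kernel-verified Lean document; each statement's English description precedes it below -/
import Mathlib

section
/- Let X = {x_1, ..., x_N} be a finite set of unit vectors in R^n such that for all i ≠ j, the inner product ⟨x_i, x_j⟩ ∈ {α, -α} for some α with 0 ≤ α < 1 and n·α² < 1. Then N ≤ n(1-α²)/(1 - n·α²). -/
lemma sum4_swap {β γ : Type*} [Fintype β] [Fintype γ] (f : β → β → γ → γ → ℝ) :
    ∑ i, ∑ j, ∑ a, ∑ b, f i j a b = ∑ a, ∑ b, ∑ i, ∑ j, f i j a b :=
  calc ∑ i, ∑ j, ∑ a, ∑ b, f i j a b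
      = ∑ i, ∑ a, ∑ j, ∑ b, f i j a b :=
        Finset.sum_congr rfl fun i _ => Finset.sum_comm
    _ = ∑ a, ∑ i, ∑ j, ∑ b, f i j a b := Finset.sum_comm
    _ = ∑ a, ∑ i, ∑ b, ∑ j, f i j a b :=
        Finset.sum_congr rfl fun a _ => Finset.sum_congr rfl fun i _ => Finset.sum_comm
    _ = ∑ a, ∑ b, ∑ i, ∑ j, f i j a b :=
        Finset.sum_congr rfl fun a _ => Finset.sum_comm

theorem relative_bound (n N : ℕ) (x : Fin N → EuclideanSpace ℝ (Fin n)) (α : ℝ)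
    (hα0 : 0 ≤ α) (hα1 : α < 1) (hnα : (n : ℝ) * α ^ 2 < 1)
    (hunit : ∀ i, ‖x i‖ = 1)
    (hang : ∀ i j, i ≠ j →
      (inner ℝ (x i) (x j) : ℝ) = α ∨ (inner ℝ (x i) (x j) : ℝ) = -α) :
    (N : ℝ) ≤ (n : ℝ) * (1 - α ^ 2) / (1 - (n : ℝ) * α ^ 2) := by
  have hden : (0:ℝ) < 1 - (n:ℝ) * α ^ 2 := by linarith
  have hα2 : α ^ 2 < 1 := by nlinarith
  rcases Nat.eq_zero_or_pos N with hN | hN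
  · subst hN
    simp only [Nat.cast_zero]
    apply div_nonneg _ hden.le
    have : (0:ℝ) ≤ n := Nat.cast_nonneg n
    nlinarith
  have hn : 0 < n := by
    by_contra h
    have hn0 : n = 0 := by omega
    subst hn0
    have h1 := hunit ⟨0, hN⟩
    have h0 : x ⟨0, hN⟩ = 0 := Subsingleton.elim _ _
    rw [h0] at h1
    simp at h1
  have hinner : ∀ i j, (inner ℝ (x i) (x j) : ℝ) = ∑ a, x i a * x j a := by
    intro i j
    rw [PiLp.inner_apply]
    simp [RCLike.inner_apply, mul_comm]
  have hdiag : ∀ i, (inner ℝ (x i) (x i) : ℝ) = 1 := by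
    intro i
    rw [real_inner_self_eq_norm_sq, hunit]
    norm_num
  have hsq : ∀ i j, i ≠ j → (inner ℝ (x i) (x j) : ℝ)^2 = α^2 := by
    intro i j h
    rcases hang i j h with h | h <;> rw [h] <;> ring
  set S : ℝ := ∑ i, ∑ j, (inner ℝ (x i) (x j) : ℝ)^2 with hS
  have hSval : S = N + ((N:ℝ)^2 - N) * α^2 := by
    rw [hS]
    have h1 : ∀ i : Fin N, ∑ j, (inner ℝ (x i) (x j) : ℝ)^2 = 1 + ((N:ℝ) - 1) * α^2 := by
      intro i
      rw [← Finset.sum_erase_add _ _ (Finset.mem_univ i), hdiag]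
      rw [Finset.sum_congr rfl (fun j hj => hsq i j (fun h => (Finset.mem_erase.mp hj).1 h.symm))]
      rw [Finset.sum_const, Finset.card_erase_of_mem (Finset.mem_univ i), Finset.card_univ,
        Fintype.card_fin, nsmul_eq_mul, Nat.cast_sub hN]
      push_cast
      ring
    rw [Finset.sum_congr rfl (fun i _ => h1 i), Finset.sum_const, Finset.card_univ,
      Fintype.card_fin, nsmul_eq_mul]
    ring
  set v : Fin n → Fin n → ℝ := fun a b => ∑ i, x i a * x i b with hv
  have hexch : S = ∑ a, ∑ b, (v a b)^2 := by
    rw [hS]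
    simp only [hinner, hv, sq, Finset.sum_mul_sum]
    rw [sum4_swap]
    refine Finset.sum_congr rfl fun a _ => Finset.sum_congr rfl fun b _ =>
      Finset.sum_congr rfl fun i _ => Finset.sum_congr rfl fun j _ => by ring
  have htrace : ∑ a, v a a = N := by
    rw [hv]
    simp only
    rw [Finset.sum_comm]
    have h2 : ∀ i : Fin N, ∑ a, x i a * x i a = 1 := by
      intro i
      have := hdiag i
      rw [hinner] at this
      exact this
    rw [Finset.sum_congr rfl (fun i _ => h2 i), Finset.sum_const, Finset.card_univ,
      Fintype.card_fin, nsmul_eq_mul, mul_one]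
  have hcs : ((N:ℝ))^2 ≤ (n:ℝ) * ∑ a, (v a a)^2 := by
    have := sq_sum_le_card_mul_sum_sq (s := (Finset.univ : Finset (Fin n)))
      (f := fun a => v a a)
    rw [htrace] at this
    simpa using this
  have hdiagsum : ∑ a, (v a a)^2 ≤ ∑ a, ∑ b, (v a b)^2 := by
    apply Finset.sum_le_sum
    intro a _
    exact Finset.single_le_sum (f := fun b => (v a b)^2) (fun b _ => sq_nonneg _)
      (Finset.mem_univ a)
  have hkey : ((N:ℝ))^2 ≤ (n:ℝ) * S := by
    rw [hexch]
    calc ((N:ℝ))^2 ≤ (n:ℝ) * ∑ a, (v a a)^2 := hcs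
      _ ≤ (n:ℝ) * ∑ a, ∑ b, (v a b)^2 :=
          mul_le_mul_of_nonneg_left hdiagsum (by positivity)
  rw [hSval] at hkey
  rw [le_div_iff₀ hden]
  have hN1 : (1:ℝ) ≤ N := by exact_mod_cast hN
  nlinarith [hkey, hN1, hden]
end

section
/- Let X = {x_1, ..., x_N} be a finite set of unit vectors in R^n such that for all i ≠ j, ⟨x_i, x_j⟩ ∈ {α, -α} for some fixed α with 0 ≤ α < 1. Then N ≤ n(n+1)/2. -/
theorem gerzon_bound (n N : ℕ) (x : Fin N → EuclideanSpace ℝ (Fin n)) (α : ℝ)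
    (hα0 : 0 ≤ α) (hα1 : α < 1)
    (hunit : ∀ i, ‖x i‖ = 1)
    (hang : ∀ i j, i ≠ j →
      (inner ℝ (x i) (x j) : ℝ) = α ∨ (inner ℝ (x i) (x j) : ℝ) = -α) :
    N ≤ n * (n + 1) / 2 := by
  classical
  -- the "matrix" vectors w j : Sym2 (Fin n) → ℝ
  set w : Fin N → (Sym2 (Fin n) → ℝ) := fun j =>
    Sym2.lift ⟨fun a b => x j a * x j b - if a = b then α ^ 2 else 0, by
      intro a b
      dsimp only
      rw [mul_comm (x j a)]
      congr 1
      simp [eq_comm]⟩ with hw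
  -- the evaluation linear map
  let T : (Sym2 (Fin n) → ℝ) →ₗ[ℝ] (Fin N → ℝ) :=
  { toFun := fun v i => ∑ a, ∑ b, v s(a, b) * (x i a * x i b)
    map_add' := by
      intro u v
      funext i
      simp [add_mul, Finset.sum_add_distrib]
    map_smul' := by
      intro c v
      funext i
      simp [Finset.mul_sum, mul_assoc] }
  have hinner : ∀ i j : Fin N, (inner ℝ (x i) (x j) : ℝ) = ∑ a, x i a * x j a := by
    intro i j
    simp [PiLp.inner_apply, RCLike.inner_apply, mul_comm]
  have hTw : ∀ j, T (w j) = (1 - α ^ 2) • Pi.single j (1 : ℝ) := by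
    intro j
    funext i
    have key : ∀ a : Fin n, ∑ b, (x j a * x j b - if a = b then α ^ 2 else 0) * (x i a * x i b)
        = x i a * x j a * (∑ b, x i b * x j b) - α ^ 2 * (x i a * x i a) := by
      intro a
      simp only [sub_mul, ite_mul, zero_mul]
      rw [Finset.sum_sub_distrib, Finset.sum_ite_eq, if_pos (Finset.mem_univ a),
        Finset.mul_sum]
      congr 1
      apply Finset.sum_congr rfl
      intro b _
      ring
    have hthis : T (w j) i = (∑ a, x i a * x j a) ^ 2 - α ^ 2 * ∑ a, x i a * x i a := by
      show (∑ a, ∑ b, (x j a * x j b - if a = b then α ^ 2 else 0) * (x i a * x i b)) = _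
      rw [Finset.sum_congr rfl fun a _ => key a, Finset.sum_sub_distrib,
        ← Finset.sum_mul, ← Finset.mul_sum]
      ring
    have hs : ∑ a, x i a * x i a = 1 := by
      rw [← hinner i i, real_inner_self_eq_norm_sq, hunit i]; norm_num
    rw [hthis, hs]
    by_cases hij : i = j
    · subst hij
      simp [hs]
    · rcases hang i j hij with h | h <;>
        rw [← hinner i j, h] <;> simp [Pi.single_apply, hij, neg_pow]
  -- linear independence of w
  have hα2 : (1 : ℝ) - α ^ 2 ≠ 0 := by nlinarith
  have hindep : LinearIndependent ℝ w := by
    have hTindep : LinearIndependent ℝ (T ∘ w) := by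
      have heq : T ∘ w = fun j =>
          (fun _ : Fin N => Units.mk0 ((1 : ℝ) - α ^ 2) hα2) j • (Pi.basisFun ℝ (Fin N)) j := by
        funext j
        rw [Function.comp_apply, hTw j]
        simp [Units.smul_def, Pi.basisFun_apply]
      rw [heq]
      exact (Pi.basisFun ℝ (Fin N)).linearIndependent.units_smul _
    exact LinearIndependent.of_comp T hTindep
  have hcard := hindep.fintype_card_le_finrank
  rw [Module.finrank_fintype_fun_eq_card] at hcard
  simpa [Sym2.card, Nat.choose_two_right, Nat.mul_comm, Nat.add_sub_cancel] using hcard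
end

section
/- Let X = {x_1, ..., x_N} be a finite set of unit vectors in R^n whose pairwise inner products (for distinct points) take at most s distinct values β_1, ..., β_s. Then N ≤ C(n+s-1, s) + C(n+s-2, s-1). -/
open Finset

namespace AbsBound

variable {n N : ℕ} (x : Fin N → EuclideanSpace ℝ (Fin n))

/-- monomial function attached to a multiset of coordinates -/
noncomputable def w (m : Multiset (Fin n)) : Fin N → ℝ :=
  fun k => (m.map (fun i => x k i)).prod

lemma w_cons (i : Fin n) (m : Multiset (Fin n)) :
    w x (i ::ₘ m) = fun k => x k i * w x m k := by
  funext k; simp [w]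

/-- index type for monomials of degree s or s-1 -/
noncomputable def v (s : ℕ) : Sym (Fin n) s ⊕ Sym (Fin n) (s - 1) → (Fin N → ℝ)
  | Sum.inl m => w x m.val
  | Sum.inr m => w x m.val

noncomputable def W (s : ℕ) : Submodule ℝ (Fin N → ℝ) :=
  Submodule.span ℝ (Set.range (v x s))

lemma sq_sum (hx : ∀ k, (∑ i, x k i ^ 2) = 1) (k : Fin N) :
    ∑ i, x k i * x k i = 1 := by
  simpa [pow_two] using hx k

lemma lemA (s : ℕ) (hx : ∀ k, (∑ i, x k i ^ 2) = 1) :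
    ∀ t (m : Multiset (Fin n)),
      (Multiset.card m + 2 * t = s ∨ Multiset.card m + 2 * t = s - 1) →
      w x m ∈ W x s := by
  intro t
  induction t with
  | zero =>
      intro m hm
      simp only [Nat.mul_zero, Nat.add_zero] at hm
      rcases hm with hm | hm
      · exact Submodule.subset_span ⟨Sum.inl ⟨m, hm⟩, rfl⟩
      · exact Submodule.subset_span ⟨Sum.inr ⟨m, hm⟩, rfl⟩
  | succ t ih =>
      intro m hm
      have hkey : w x m = ∑ i : Fin n, w x (i ::ₘ i ::ₘ m) := by
        funext k
        have : (∑ i : Fin n, w x (i ::ₘ i ::ₘ m)) k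
            = ∑ i : Fin n, x k i * x k i * w x m k := by
          simp [w_cons, mul_assoc]
        rw [this, ← Finset.sum_mul, sq_sum x hx k, one_mul]
      rw [hkey]
      refine Submodule.sum_mem _ (fun i _ => ih (i ::ₘ i ::ₘ m) ?_)
      rcases hm with hm | hm
      · left; simp only [Multiset.card_cons]; omega
      · right; simp only [Multiset.card_cons]; omega

lemma lemA' (s : ℕ) (hx : ∀ k, (∑ i, x k i ^ 2) = 1)
    (m : Multiset (Fin n)) (hm : Multiset.card m ≤ s) :
    w x m ∈ W x s := by
  rcases Nat.even_or_odd (s - Multiset.card m) with ⟨t, ht⟩ | ⟨t, ht⟩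
  · exact lemA x s hx t m (Or.inl (by omega))
  · exact lemA x s hx t m (Or.inr (by omega))

lemma inner_eq (k : Fin N) (y : EuclideanSpace ℝ (Fin n)) :
    (inner ℝ (x k) y : ℝ) = ∑ i, x k i * y i := by
  simp [PiLp.inner_apply, RCLike.inner_apply, mul_comm]

lemma lemC (s : ℕ) (hx : ∀ k, (∑ i, x k i ^ 2) = 1)
    (y : EuclideanSpace ℝ (Fin n)) (Q : Finset ℝ) (hQ : Q.card ≤ s) :
    (fun k => ∏ t ∈ Q, ((inner ℝ (x k) y : ℝ) - t)) ∈ W x s := by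
  classical
  -- stronger statement: product lies in span of monomials of degree ≤ card Q
  suffices h : ∀ Q : Finset ℝ, (fun k => ∏ t ∈ Q, ((inner ℝ (x k) y : ℝ) - t)) ∈
      Submodule.span ℝ (w x '' {m | Multiset.card m ≤ Q.card}) by
    refine Submodule.span_le.mpr ?_ (h Q)
    rintro _ ⟨m, hm, rfl⟩
    exact lemA' x s hx m (le_trans hm hQ)
  intro Q
  induction Q using Finset.induction_on with
  | empty =>
      refine Submodule.subset_span ⟨0, by simp, ?_⟩
      funext k; simp [w]
  | @insert a Q ha ih =>
      have hprod : (fun k => ∏ t ∈ insert a Q, ((inner ℝ (x k) y : ℝ) - t))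
          = (fun k => ((inner ℝ (x k) y : ℝ) - a) * ∏ t ∈ Q, ((inner ℝ (x k) y : ℝ) - t)) := by
        funext k; rw [Finset.prod_insert ha]
      rw [hprod]
      -- multiplication by the linear factor maps span to span
      have key : ∀ f ∈ Submodule.span ℝ (w x '' {m | Multiset.card m ≤ Q.card}),
          (fun k => ((inner ℝ (x k) y : ℝ) - a) * f k) ∈
            Submodule.span ℝ (w x '' {m | Multiset.card m ≤ Q.card + 1}) := by
        intro f hf
        induction hf using Submodule.span_induction with
        | mem g hg =>
            obtain ⟨m, hm, rfl⟩ := hg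
            have : (fun k => ((inner ℝ (x k) y : ℝ) - a) * w x m k)
                = (∑ i : Fin n, y i • w x (i ::ₘ m)) - a • w x m := by
              funext k
              simp only [Pi.sub_apply, Pi.smul_apply, Finset.sum_apply, smul_eq_mul,
                w_cons, inner_eq]
              rw [sub_mul, Finset.sum_mul]
              congr 1
              exact Finset.sum_congr rfl (fun i _ => by ring)
            rw [this]
            refine Submodule.sub_mem _ (Submodule.sum_mem _ (fun i _ => ?_)) ?_
            · exact Submodule.smul_mem _ _ (Submodule.subset_span
                ⟨i ::ₘ m, by simpa using Nat.add_le_add_right hm 1, rfl⟩)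
            · exact Submodule.smul_mem _ _ (Submodule.subset_span
                ⟨m, le_trans hm (Nat.le_succ _), rfl⟩)
        | zero =>
            have hz : (fun k => ((inner ℝ (x k) y : ℝ) - a) * (0 : Fin N → ℝ) k)
                = (0 : Fin N → ℝ) := by funext k; simp
            rw [hz]; exact Submodule.zero_mem _
        | add g h _ _ hg hh =>
            have : (fun k => ((inner ℝ (x k) y : ℝ) - a) * (g + h) k)
                = (fun k => ((inner ℝ (x k) y : ℝ) - a) * g k)
                + (fun k => ((inner ℝ (x k) y : ℝ) - a) * h k) := by
              funext k; simp [mul_add]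
            rw [this]; exact Submodule.add_mem _ hg hh
        | smul c g _ hg =>
            have : (fun k => ((inner ℝ (x k) y : ℝ) - a) * (c • g) k)
                = c • fun k => ((inner ℝ (x k) y : ℝ) - a) * g k := by
              funext k; simp [mul_comm, mul_assoc, mul_left_comm]
            rw [this]; exact Submodule.smul_mem _ _ hg
      have := key _ ih
      rwa [Finset.card_insert_of_notMem ha]

end AbsBound

theorem absolute_bound (n N s : ℕ) (x : Fin N → EuclideanSpace ℝ (Fin n))
    (β : Fin s → ℝ)
    (hinj : Function.Injective x)
    (hunit : ∀ i, ‖x i‖ = 1)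
    (hang : ∀ i j, i ≠ j → ∃ l, (inner ℝ (x i) (x j) : ℝ) = β l) :
    N ≤ Nat.choose (n + s - 1) s + Nat.choose (n + s - 2) (s - 1) := by
  classical
  have hx : ∀ k, (∑ i, x k i ^ 2) = 1 := by
    intro k
    have h1 : (inner ℝ (x k) (x k) : ℝ) = 1 := by
      rw [real_inner_self_eq_norm_sq, hunit k]; norm_num
    rw [AbsBound.inner_eq] at h1
    simpa [pow_two] using h1
  -- set of attained inner products
  set T : Finset ℝ := Finset.image (fun p : Fin N × Fin N => (inner ℝ (x p.1) (x p.2) : ℝ))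
    (Finset.univ.filter fun p : Fin N × Fin N => p.1 ≠ p.2) with hT
  have hTcard : T.card ≤ s := by
    have hsub : T ⊆ Finset.image β Finset.univ := by
      intro t ht
      rw [hT, Finset.mem_image] at ht
      obtain ⟨p, hp, rfl⟩ := ht
      rw [Finset.mem_filter] at hp
      obtain ⟨l, hl⟩ := hang p.1 p.2 hp.2
      exact Finset.mem_image.mpr ⟨l, Finset.mem_univ _, hl.symm⟩
    calc T.card ≤ (Finset.image β Finset.univ).card := Finset.card_le_card hsub
      _ ≤ s := le_trans Finset.card_image_le (by simp)
  have hT1 : ∀ t ∈ T, t ≠ 1 := by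
    intro t ht
    rw [hT, Finset.mem_image] at ht
    obtain ⟨p, hp, rfl⟩ := ht
    rw [Finset.mem_filter] at hp
    intro h1
    exact hp.2 (hinj ((inner_eq_one_iff_of_norm_eq_one (hunit p.1) (hunit p.2)).mp h1))
  -- the key functions
  set u : Fin N → (Fin N → ℝ) :=
    fun j k => ∏ t ∈ T, ((inner ℝ (x k) (x j) : ℝ) - t) with hu
  set c : ℝ := ∏ t ∈ T, (1 - t) with hc
  have hcne : c ≠ 0 := Finset.prod_ne_zero_iff.mpr fun t ht => sub_ne_zero.mpr (hT1 t ht).symm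
  have hdiag : ∀ j, u j j = c := by
    intro j
    have h1 : (inner ℝ (x j) (x j) : ℝ) = 1 := by
      rw [real_inner_self_eq_norm_sq, hunit j]; norm_num
    show (∏ t ∈ T, ((inner ℝ (x j) (x j) : ℝ) - t)) = c
    rw [hc]
    exact Finset.prod_congr rfl fun t _ => by rw [h1]
  have hoff : ∀ j k, k ≠ j → u j k = 0 := by
    intro j k hkj
    refine Finset.prod_eq_zero (i := (inner ℝ (x k) (x j) : ℝ)) ?_ (sub_self _)
    rw [hT, Finset.mem_image]
    exact ⟨(k, j), Finset.mem_filter.mpr ⟨Finset.mem_univ _, hkj⟩, rfl⟩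
  -- linear independence
  have hli : LinearIndependent ℝ u := by
    rw [Fintype.linearIndependent_iff]
    intro g hg k
    have := congrFun hg k
    simp only [Finset.sum_apply, Pi.smul_apply, smul_eq_mul, Pi.zero_apply] at this
    have hsum : ∑ j, g j * u j k = g k * c := by
      rw [Finset.sum_eq_single k]
      · rw [hdiag k]
      · intro j _ hjk; rw [hoff j k (Ne.symm hjk)]; ring
      · intro h; exact absurd (Finset.mem_univ k) h
    rw [hsum] at this
    exact (mul_eq_zero.mp this).resolve_right hcne
  -- membership in W
  have hmem : ∀ j, u j ∈ AbsBound.W x s := fun j =>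
    AbsBound.lemC x s hx (x j) T hTcard
  -- conclude
  have hfd : FiniteDimensional ℝ (AbsBound.W x s) :=
    FiniteDimensional.span_of_finite ℝ (Set.finite_range _)
  let u' : Fin N → AbsBound.W x s := fun j => ⟨u j, hmem j⟩
  have hli' : LinearIndependent ℝ u' := by
    have : u = (AbsBound.W x s).subtype ∘ u' := rfl
    exact LinearIndependent.of_comp _ (this ▸ hli)
  have hN : N ≤ Module.finrank ℝ (AbsBound.W x s) := by
    simpa using hli'.fintype_card_le_finrank
  have hdim : Module.finrank ℝ (AbsBound.W x s) ≤
      Fintype.card (Sym (Fin n) s ⊕ Sym (Fin n) (s - 1)) :=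
    finrank_range_le_card _
  have hcardI : Fintype.card (Sym (Fin n) s ⊕ Sym (Fin n) (s - 1))
      = Nat.choose (n + s - 1) s + Nat.choose (n + s - 2) (s - 1) := by
    rw [Fintype.card_sum, Sym.card_sym_eq_multichoose, Sym.card_sym_eq_multichoose,
      Nat.multichoose_eq, Nat.multichoose_eq, Fintype.card_fin]
    rcases Nat.eq_zero_or_pos s with rfl | hs
    · simp
    · congr 2
      omega
  omega
end

section
/- Let X = {x_1, ..., x_N} be a spherical two-distance set in S^{n-1} ⊂ R^n (N ≥ 2) with inner products α and β (α, β < 1) such that α + β < 0. Then there exist t ∈ (0, 1] and a unit vector y in R^{n+1} such that the N points t·x_i + √(1-t²)·y (embedding R^n ⊂ R^{n+1} orthogonally to y) form an equiangular set in S^n, i.e., a two-distance set with inner products γ and -γ for some γ ∈ [0,1). -/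
theorem two_distance_to_equiangular (n N : ℕ) (hN : 2 ≤ N) (α β : ℝ)
    (hα : α < 1) (hβ : β < 1) (hsum : α + β < 0)
    (x : Fin N → EuclideanSpace ℝ (Fin (n + 1)))
    (hunit : ∀ i, ‖x i‖ = 1)
    (hlast : ∀ i, x i (Fin.last n) = 0)
    (hang : ∀ i j, i ≠ j →
      (inner ℝ (x i) (x j) : ℝ) = α ∨ (inner ℝ (x i) (x j) : ℝ) = β)
    (hattα : ∃ i j, i ≠ j ∧ (inner ℝ (x i) (x j) : ℝ) = α)
    (hattβ : ∃ i j, i ≠ j ∧ (inner ℝ (x i) (x j) : ℝ) = β) :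
    ∃ t ∈ Set.Ioc (0 : ℝ) 1, ∃ y : EuclideanSpace ℝ (Fin (n + 1)), ‖y‖ = 1 ∧
      (∀ i, (inner ℝ (x i) y : ℝ) = 0) ∧
      ∃ γ ∈ Set.Ico (0 : ℝ) 1,
        (∀ i, ‖t • x i + Real.sqrt (1 - t ^ 2) • y‖ = 1) ∧
        ∀ i j, i ≠ j →
          (inner ℝ (t • x i + Real.sqrt (1 - t ^ 2) • y)
              (t • x j + Real.sqrt (1 - t ^ 2) • y) : ℝ) = γ ∨
          (inner ℝ (t • x i + Real.sqrt (1 - t ^ 2) • y)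
              (t • x j + Real.sqrt (1 - t ^ 2) • y) : ℝ) = -γ := by
  set d : ℝ := 2 - (α + β) with hd
  have hd2 : (2 : ℝ) < d := by simp [hd]; linarith
  have hdpos : (0 : ℝ) < d := by linarith
  set t : ℝ := Real.sqrt (2 / d) with ht
  have ht2 : t ^ 2 = 2 / d := Real.sq_sqrt (by positivity)
  have htpos : 0 < t := Real.sqrt_pos.2 (by positivity)
  have hle : t ≤ 1 := by
    rw [ht, show (1:ℝ) = Real.sqrt 1 by simp]
    exact Real.sqrt_le_sqrt (by rw [div_le_one hdpos]; linarith)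
  have h1t2 : 1 - t ^ 2 = -(α + β) / d := by
    rw [ht2]; field_simp; rw [hd]; ring
  have h1t2nn : 0 ≤ 1 - t ^ 2 := by
    rw [h1t2]; exact div_nonneg (by linarith) hdpos.le
  set s : ℝ := Real.sqrt (1 - t ^ 2) with hs
  have hs2 : s ^ 2 = 1 - t ^ 2 := Real.sq_sqrt h1t2nn
  refine ⟨t, ⟨htpos, hle⟩, EuclideanSpace.single (Fin.last n) 1, by simp, ?_, ?_⟩
  · intro i
    rw [EuclideanSpace.inner_single_right]
    simp [hlast i]
  · set y : EuclideanSpace ℝ (Fin (n + 1)) := EuclideanSpace.single (Fin.last n) 1 with hy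
    have hyn : ‖y‖ = 1 := by simp [hy]
    have hxy : ∀ i, (inner ℝ (x i) y : ℝ) = 0 := by
      intro i; rw [hy, EuclideanSpace.inner_single_right]; simp [hlast i]
    have hyx : ∀ i, (inner ℝ y (x i) : ℝ) = 0 := by
      intro i; rw [real_inner_comm]; exact hxy i
    have hexp : ∀ i j, (inner ℝ (t • x i + s • y) (t • x j + s • y) : ℝ) =
        t ^ 2 * (inner ℝ (x i) (x j) : ℝ) + (1 - t ^ 2) := by
      intro i j
      rw [inner_add_left, inner_add_right, inner_add_right,
        real_inner_smul_left, real_inner_smul_right, real_inner_smul_left,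
        real_inner_smul_right, real_inner_smul_left, real_inner_smul_right,
        real_inner_smul_left, real_inner_smul_right,
        hxy i, hyx j, real_inner_self_eq_norm_sq, hyn, ← hs2]
      ring
    refine ⟨|t ^ 2 * α + (1 - t ^ 2)|, ⟨abs_nonneg _, ?_⟩, ?_, ?_⟩
    · have hv : t ^ 2 * α + (1 - t ^ 2) = (α - β) / d := by
        rw [ht2]; field_simp; rw [hd]; ring
      rw [hv, abs_div, abs_of_pos hdpos, div_lt_one hdpos]
      refine abs_lt.mpr ⟨?_, ?_⟩ <;> (rw [hd]; linarith)
    · intro i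
      have : ‖t • x i + s • y‖ ^ 2 = 1 := by
        rw [← real_inner_self_eq_norm_sq, hexp i i, real_inner_self_eq_norm_sq,
          hunit i]
        ring
      nlinarith [norm_nonneg (t • x i + s • y)]
    · intro i j hij
      have hneg : t ^ 2 * β + (1 - t ^ 2) = -(t ^ 2 * α + (1 - t ^ 2)) := by
        rw [ht2]; field_simp; rw [hd]; ring
      rcases hang i j hij with h | h <;> rw [hexp i j, h]
      · rcases abs_cases (t ^ 2 * α + (1 - t ^ 2)) with ⟨he, _⟩ | ⟨he, _⟩
        · left; linarith
        · right; linarith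
      · rcases abs_cases (t ^ 2 * α + (1 - t ^ 2)) with ⟨he, _⟩ | ⟨he, _⟩
        · right; linarith
        · left; linarith
end

section
/- Let a ≥ 3 be an integer, N ≥ 1, and suppose nonnegative integers N_1, N_2 satisfy N_1 + N_2 = N(N-1) together with the two inequalities N + N_1/(a+1) - N_2/(a-1) ≥ 0 and N + N_1·(-2a-6)/((a²-6)(a+1)³) + N_2·(-2a+6)/((a²-6)(a-1)³) ≥ 0. Then N ≤ (a⁴ - 3a²)/2. -/
/-!
Clear the denominators of both inequalities (all positive for `a > √6`). With
`y = a²`, sixteen times the first plus the second is, after substituting `N₁ + N₂ = N (N - 1)`,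
the product `N (y - 1) (y - 5) (y² - 3y - 2N)`; the coefficients of `N₁` and `N₂` agree, both
being `-2 (y - 1) (y - 5)`, which is why this particular multiplier works. Its nonnegativity
gives `2N ≤ y² - 3y`.
-/

namespace GegenbauerCounting

variable {x N N₁ N₂ : ℝ}

lemma degree_one_cleared (hx : 1 < x) (h : 0 ≤ N + N₁ / (x + 1) - N₂ / (x - 1)) :
    0 ≤ N * (x ^ 2 - 1) + N₁ * (x - 1) - N₂ * (x + 1) := by
  have hp : 0 < x + 1 := by linarith
  have hm : 0 < x - 1 := by linarith
  have key : (x + 1) * (x - 1) * (N + N₁ / (x + 1) - N₂ / (x - 1))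
      = N * (x ^ 2 - 1) + N₁ * (x - 1) - N₂ * (x + 1) := by
    field_simp
    ring
  exact key ▸ mul_nonneg (mul_pos hp hm).le h

lemma degree_three_cleared (hx : 1 < x) (hx6 : 6 < x ^ 2)
    (h : 0 ≤ N + N₁ * (-2 * x - 6) / ((x ^ 2 - 6) * (x + 1) ^ 3)
        + N₂ * (-2 * x + 6) / ((x ^ 2 - 6) * (x - 1) ^ 3)) :
    0 ≤ N * ((x ^ 2 - 6) * (x + 1) ^ 3 * (x - 1) ^ 3)
        + N₁ * (-2 * x - 6) * (x - 1) ^ 3 + N₂ * (-2 * x + 6) * (x + 1) ^ 3 := by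
  have hp : 0 < x + 1 := by linarith
  have hm : 0 < x - 1 := by linarith
  have h6 : 0 < x ^ 2 - 6 := by linarith
  have key : (x ^ 2 - 6) * (x + 1) ^ 3 * (x - 1) ^ 3
      * (N + N₁ * (-2 * x - 6) / ((x ^ 2 - 6) * (x + 1) ^ 3)
        + N₂ * (-2 * x + 6) / ((x ^ 2 - 6) * (x - 1) ^ 3))
      = N * ((x ^ 2 - 6) * (x + 1) ^ 3 * (x - 1) ^ 3)
        + N₁ * (-2 * x - 6) * (x - 1) ^ 3 + N₂ * (-2 * x + 6) * (x + 1) ^ 3 := by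
    field_simp
  exact key ▸ mul_nonneg (by positivity) h

lemma sixteen_mul_degree_one_add_degree_three (hsum : N₁ + N₂ = N * (N - 1)) :
    16 * (N * (x ^ 2 - 1) + N₁ * (x - 1) - N₂ * (x + 1))
        + (N * ((x ^ 2 - 6) * (x + 1) ^ 3 * (x - 1) ^ 3)
          + N₁ * (-2 * x - 6) * (x - 1) ^ 3 + N₂ * (-2 * x + 6) * (x + 1) ^ 3)
      = N * ((x ^ 2 - 1) * (x ^ 2 - 5)) * (x ^ 4 - 3 * x ^ 2 - 2 * N) := by
  linear_combination (-2 * (x ^ 2 - 1) * (x ^ 2 - 5)) * hsum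

theorem le_of_degree_one_of_degree_three (hx : 1 < x) (hx6 : 6 < x ^ 2) (hN : 0 < N)
    (hsum : N₁ + N₂ = N * (N - 1))
    (h1 : 0 ≤ N + N₁ / (x + 1) - N₂ / (x - 1))
    (h3 : 0 ≤ N + N₁ * (-2 * x - 6) / ((x ^ 2 - 6) * (x + 1) ^ 3)
        + N₂ * (-2 * x + 6) / ((x ^ 2 - 6) * (x - 1) ^ 3)) :
    N ≤ (x ^ 4 - 3 * x ^ 2) / 2 := by
  have hcomb : 0 ≤ N * ((x ^ 2 - 1) * (x ^ 2 - 5)) * (x ^ 4 - 3 * x ^ 2 - 2 * N) := by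
    rw [← sixteen_mul_degree_one_add_degree_three hsum]
    linarith [degree_one_cleared hx h1, degree_three_cleared hx hx6 h3]
  have hfactor : 0 < N * ((x ^ 2 - 1) * (x ^ 2 - 5)) :=
    mul_pos hN (mul_pos (by linarith) (by linarith))
  linarith [nonneg_of_mul_nonneg_right hcomb hfactor]

end GegenbauerCounting

theorem gegenbauer_counting_bound (a : ℤ) (ha : 3 ≤ a) (N N1 N2 : ℕ) (hN : 1 ≤ N)
    (hsum : (N1 : ℝ) + N2 = (N : ℝ) * ((N : ℝ) - 1))
    (h1 : (N : ℝ) + (N1 : ℝ) / ((a : ℝ) + 1) - (N2 : ℝ) / ((a : ℝ) - 1) ≥ 0)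
    (h2 : (N : ℝ) + (N1 : ℝ) * (-2 * (a : ℝ) - 6) / (((a : ℝ) ^ 2 - 6) * ((a : ℝ) + 1) ^ 3)
        + (N2 : ℝ) * (-2 * (a : ℝ) + 6) / (((a : ℝ) ^ 2 - 6) * ((a : ℝ) - 1) ^ 3) ≥ 0) :
    (N : ℝ) ≤ ((a : ℝ) ^ 4 - 3 * (a : ℝ) ^ 2) / 2 := by
  have ha' : (3 : ℝ) ≤ a := by exact_mod_cast ha
  have hN' : (0 : ℝ) < N := by exact_mod_cast hN
  exact GegenbauerCounting.le_of_degree_one_of_degree_three (by linarith) (by nlinarith) hN'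
    hsum h1 h2
end
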